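/- Every nonempty extension-set 𝕊 in the signature of stable semantics with |𝕊| ≤ 3 belongs to the c-signature of stable semantics; i.e., if stb(F) = 𝕊 for some AF F, 𝕊 ≠ ∅ and |𝕊| ≤ 3, then there exists a stb-compact AF F' with stb(F') = 𝕊. -/

import Mathlib

structure AF where
  A : Finset ℕ
  R : Set (ℕ × ℕ)
  R_sub : ∀ p ∈ R, p.1 ∈ A ∧ p.2 ∈ A

namespace AF

def cf (F : AF) : Set (Set ℕ) :=
  {S | S ⊆ ↑F.A ∧ ∀ a ∈ S, ∀ b ∈ S, (a, b) ∉ F.R}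

def defends (F : AF) (S : Set ℕ) (a : ℕ) : Prop :=
  ∀ b, (b, a) ∈ F.R → ∃ s ∈ S, (s, b) ∈ F.R

def adm (F : AF) : Set (Set ℕ) :=
  {S | S ∈ F.cf ∧ ∀ a ∈ S, F.defends S a}

def rng (F : AF) (S : Set ℕ) : Set ℕ :=
  S ∪ {b | ∃ s ∈ S, (s, b) ∈ F.R}

def naive (F : AF) : Set (Set ℕ) :=
  {S | S ∈ F.cf ∧ ∀ T ∈ F.cf, S ⊆ T → S = T}

def stb (F : AF) : Set (Set ℕ) :=
  {S | S ∈ F.cf ∧ ∀ a ∈ F.A, a ∉ S → ∃ s ∈ S, (s, a) ∈ F.R}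

def pref (F : AF) : Set (Set ℕ) :=
  {S | S ∈ F.adm ∧ ∀ T ∈ F.adm, S ⊆ T → S = T}

def stage (F : AF) : Set (Set ℕ) :=
  {S | S ∈ F.cf ∧ ¬ ∃ T ∈ F.cf, F.rng S ⊂ F.rng T}

def sem (F : AF) : Set (Set ℕ) :=
  {S | S ∈ F.adm ∧ ¬ ∃ T ∈ F.adm, F.rng S ⊂ F.rng T}

end AF

abbrev Semantics := AF → Set (Set ℕ)

def StandardSemantics : Set Semantics :=
  {AF.naive, AF.stb, AF.stage, AF.pref, AF.sem}

def AFCompact (σ : Semantics) (F : AF) : Prop :=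
  ∀ a ∈ F.A, ∃ S ∈ σ F, a ∈ S

def CAF (σ : Semantics) : Set AF := {F | AFCompact σ F}

def ArgS (𝕊 : Set (Set ℕ)) : Set ℕ := ⋃₀ 𝕊

def PairsS (𝕊 : Set (Set ℕ)) : Set (ℕ × ℕ) :=
  {p | ∃ S ∈ 𝕊, p.1 ∈ S ∧ p.2 ∈ S}

def IsExtensionSet (𝕊 : Set (Set ℕ)) : Prop := (ArgS 𝕊).Finite

def AFStep (F : AF) (a b : ℕ) : Prop := (a, b) ∈ F.R ∨ (b, a) ∈ F.R

def AFConnected (F : AF) : Prop :=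
  ∀ a ∈ F.A, ∀ b ∈ F.A, Relation.ReflTransGen (AFStep F) a b

def sameComp (F : AF) (a b : ℕ) : Prop := Relation.ReflTransGen (AFStep F) a b

def comps (F : AF) : Set (Set ℕ) :=
  {K | ∃ a ∈ F.A, K = {b ∈ (↑F.A : Set ℕ) | sameComp F a b}}

def nopairs (𝕊 : Set (Set ℕ)) (a b : ℕ) : Prop :=
  a ∈ ArgS 𝕊 ∧ b ∈ ArgS 𝕊 ∧ (a, b) ∉ PairsS 𝕊

def compsS (𝕊 : Set (Set ℕ)) : Set (Set ℕ) :=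
  {K | ∃ a ∈ ArgS 𝕊, K = {b ∈ ArgS 𝕊 | Relation.ReflTransGen (nopairs 𝕊) a b}}

noncomputable def sigmaMax (σ : Semantics) (n : ℕ) : ℕ :=
  sSup {k | ∃ F : AF, F.A.card = n ∧ (σ F).ncard = k}

noncomputable def sigmaMaxCon (σ : Semantics) (n : ℕ) : ℕ :=
  sSup {k | ∃ F : AF, F.A.card = n ∧ AFConnected F ∧ (σ F).ncard = k}

noncomputable def sigmaMax2 (σ : Semantics) (n : ℕ) : ℕ :=
  sSup ({k | ∃ F : AF, F.A.card = n ∧ (σ F).ncard = k} \ {sigmaMax σ n})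

def cfSet (𝕊 : Set (Set ℕ)) : Set (Set ℕ) :=
  {S | S ⊆ ArgS 𝕊 ∧ ∀ a ∈ S, ∀ b ∈ S, (a, b) ∈ PairsS 𝕊}

def plusSet (𝕊 : Set (Set ℕ)) : Set (Set ℕ) :=
  {S | S ∈ cfSet 𝕊 ∧ ∀ T ∈ cfSet 𝕊, S ⊆ T → S = T}

def minusSet (𝕊 : Set (Set ℕ)) : Set (Set ℕ) := plusSet 𝕊 \ 𝕊

def Sig (σ : Semantics) : Set (Set (Set ℕ)) := {𝕊 | ∃ F : AF, σ F = 𝕊}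

def cSig (σ : Semantics) : Set (Set (Set ℕ)) :=
  {𝕊 | ∃ F : AF, AFCompact σ F ∧ σ F = 𝕊}

def Pcon (σ : Semantics) (n : ℕ) : Set ℕ :=
  {k | ∃ F : AF, AFCompact σ F ∧ AFConnected F ∧ F.A.card = n ∧ (σ F).ncard = k}

open Classical in
noncomputable def restrictAF (F : AF) (K : Set ℕ) : AF where
  A := F.A.filter (fun a => a ∈ K)
  R := {p | p ∈ F.R ∧ p.1 ∈ K ∧ p.2 ∈ K}
  R_sub := fun p hp => by
    have h := F.R_sub p hp.1
    simp only [Finset.mem_filter]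
    exact ⟨⟨h.1, hp.2.1⟩, ⟨h.2, hp.2.2⟩⟩

def IsExclusionMapping (𝕊 : Set (Set ℕ)) (Rm : Set (ℕ × ℕ)) : Prop :=
  ∃ f : Set ℕ → ℕ,
    (∀ S ∈ minusSet 𝕊, f S ∈ ArgS 𝕊 ∧ f S ∉ S) ∧
    Rm = {p | ∃ S ∈ minusSet 𝕊, p.1 ∈ S ∧ p.2 = f S ∧ p ∉ PairsS 𝕊}

def Independent (𝕊 : Set (Set ℕ)) : Prop :=
  ∃ Rm : Set (ℕ × ℕ), IsExclusionMapping 𝕊 Rm ∧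
    (∀ a b, (a, b) ∈ Rm → (b, a) ∈ Rm → a = b) ∧
    ∀ S ∈ 𝕊, ∀ a ∈ ArgS 𝕊 \ S, ∃ s ∈ S, (s, a) ∉ Rm ∪ PairsS 𝕊

def ConflictExplicit (σ : Semantics) (F : AF) : Prop :=
  ∀ a ∈ F.A, ∀ b ∈ F.A, (a, b) ∉ PairsS (σ F) → (a, b) ∈ F.R ∨ (b, a) ∈ F.R

noncomputable def canonicalCF (𝕊 : Set (Set ℕ)) (h : IsExtensionSet 𝕊) : AF where
  A := h.toFinset
  R := {p | p.1 ∈ ArgS 𝕊 ∧ p.2 ∈ ArgS 𝕊 ∧ p ∉ PairsS 𝕊}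
  R_sub := fun p hp => by
    exact ⟨(Set.Finite.mem_toFinset h).mpr hp.1, (Set.Finite.mem_toFinset h).mpr hp.2.1⟩


/-! A stable extension `S` is tight: every argument of `ArgS 𝕊` outside `S` is unpaired with some
member of `S`. So every member of `𝕊` is stable in the AF on `ArgS 𝕊` attacking exactly the non-pairs,
whose stable extensions are the maximal cliques of the pairs relation. With at most three extensions,
a clique `E` contained in no `Sᵢ` lies in the pairwise intersections and meets every `(Sⱼ ∩ Sₖ) \ Sᵢ`,
so it can only exist if these three sets are nonempty. In that case pick `u ∈ S₁` unpaired with a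
point of `(S₂ ∩ S₃) \ S₁`: `u` lies in `S₁` alone, and deleting the attacks from the pairwise
intersections onto `u` leaves such an `E` unable to attack `u`, while `S₂` and `S₃` still attack `u`
from points lying in them alone. -/

/-- `E` attacks every argument outside it in the AF whose attacks are the non-pairs of `𝕊` not in `D`. -/
def AttacksOutside (𝕊 : Set (Set ℕ)) (D : Set (ℕ × ℕ)) (E : Set ℕ) : Prop :=
  ∀ a ∈ ArgS 𝕊, a ∉ E → ∃ e ∈ E, (e, a) ∉ PairsS 𝕊 ∪ D

def AF.withoutAttacks (F : AF) (D : Set (ℕ × ℕ)) : AF where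
  A := F.A
  R := F.R \ D
  R_sub p hp := F.R_sub p hp.1

section ExtensionSets

variable {𝕊 : Set (Set ℕ)}

theorem subset_ArgS {S : Set ℕ} (hS : S ∈ 𝕊) : S ⊆ ArgS 𝕊 :=
  Set.subset_sUnion_of_mem hS

theorem mem_PairsS_self {a : ℕ} (ha : a ∈ ArgS 𝕊) : (a, a) ∈ PairsS 𝕊 := by
  obtain ⟨S, hS, haS⟩ := ha
  exact ⟨S, hS, haS, haS⟩

theorem mem_PairsS_comm {a b : ℕ} : (a, b) ∈ PairsS 𝕊 ↔ (b, a) ∈ PairsS 𝕊 :=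
  ⟨fun ⟨S, hS, ha, hb⟩ => ⟨S, hS, hb, ha⟩, fun ⟨S, hS, hb, ha⟩ => ⟨S, hS, ha, hb⟩⟩

@[simp]
theorem mem_PairsS_insert {S : Set ℕ} {a b : ℕ} :
    (a, b) ∈ PairsS (insert S 𝕊) ↔ a ∈ S ∧ b ∈ S ∨ (a, b) ∈ PairsS 𝕊 := by
  simp [PairsS]

@[simp]
theorem mem_PairsS_singleton {S : Set ℕ} {a b : ℕ} : (a, b) ∈ PairsS {S} ↔ a ∈ S ∧ b ∈ S := by
  simp [PairsS]

theorem eq_of_subset_of_attacksOutside {D : Set (ℕ × ℕ)} {S E : Set ℕ} (hS : S ∈ 𝕊)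
    (hES : E ⊆ S) (hE : AttacksOutside 𝕊 D E) : E = S := by
  refine hES.antisymm fun a haS => ?_
  by_contra haE
  obtain ⟨e, he, hea⟩ := hE a (subset_ArgS hS haS) haE
  exact hea (Or.inl ⟨S, hS, hES he, haS⟩)

theorem exists_mem_forall_notMem_of_attacksOutside {S : Set ℕ} {x : ℕ}
    (hS : AttacksOutside 𝕊 ∅ S) (hx : x ∈ ArgS 𝕊) (hxS : x ∉ S) :
    ∃ s ∈ S, ∀ T ∈ 𝕊, x ∈ T → s ∉ T := by
  obtain ⟨s, hs, hsx⟩ := hS x hx hxS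
  exact ⟨s, hs, fun T hT hxT hsT => hsx (Or.inl ⟨T, hT, hsT, hxT⟩)⟩

end ExtensionSets

theorem ArgS_stb_subset (F : AF) : ArgS F.stb ⊆ F.A := by
  rintro a ⟨S, hS, haS⟩
  exact hS.1.1 haS

theorem attacksOutside_of_mem_stb {F : AF} {S : Set ℕ} (hS : S ∈ F.stb) :
    AttacksOutside F.stb ∅ S := by
  intro a ha haS
  obtain ⟨s, hs, hsa⟩ := hS.2 a (ArgS_stb_subset F ha) haS
  refine ⟨s, hs, ?_⟩
  rintro (⟨T, hT, hsT, haT⟩ | h)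
  · exact hT.1.2 s hsT a haT hsa
  · exact h

theorem afCompact_of_coe_A_eq_ArgS (σ : Semantics) (F : AF) (h : (F.A : Set ℕ) = ArgS (σ F)) :
    AFCompact σ F := fun a ha => by
  rw [← Finset.mem_coe, h] at ha
  exact ha

section CanonicalCF

variable {𝕊 : Set (Set ℕ)} {D : Set (ℕ × ℕ)}

theorem mem_stb_withoutAttacks_canonicalCF_iff (h : IsExtensionSet 𝕊)
    (hD : ∀ a b, (a, b) ∈ D → (b, a) ∈ D → a = b) {E : Set ℕ} :
    E ∈ ((canonicalCF 𝕊 h).withoutAttacks D).stb ↔ E ∈ cfSet 𝕊 ∧ AttacksOutside 𝕊 D E := by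
  have hA : ∀ a, a ∈ ((canonicalCF 𝕊 h).withoutAttacks D).A ↔ a ∈ ArgS 𝕊 := fun _ => h.mem_toFinset
  constructor
  · rintro ⟨⟨hEA, hEcf⟩, hEatt⟩
    have hEsub : E ⊆ ArgS 𝕊 := fun a ha => (hA a).1 (hEA ha)
    refine ⟨⟨hEsub, fun a ha b hb => ?_⟩, fun a ha haE => ?_⟩
    · by_contra hab
      have hab_D : (a, b) ∈ D := by
        by_contra hD'
        exact hEcf a ha b hb ⟨⟨hEsub ha, hEsub hb, hab⟩, hD'⟩
      have hba_D : (b, a) ∈ D := by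
        by_contra hD'
        exact hEcf b hb a ha ⟨⟨hEsub hb, hEsub ha, mem_PairsS_comm.not.1 hab⟩, hD'⟩
      obtain rfl := hD a b hab_D hba_D
      exact hab (mem_PairsS_self (hEsub ha))
    · obtain ⟨e, he, ⟨-, -, hPairs⟩, hD'⟩ := hEatt a ((hA a).2 ha) haE
      exact ⟨e, he, fun h => h.elim hPairs hD'⟩
  · rintro ⟨⟨hEsub, hEpairs⟩, hEatt⟩
    refine ⟨⟨fun a ha => (hA a).2 (hEsub ha), fun a ha b hb hab => hab.1.2.2 (hEpairs a ha b hb)⟩,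
      fun a ha haE => ?_⟩
    obtain ⟨e, he, hea⟩ := hEatt a ((hA a).1 ha) haE
    exact ⟨e, he, ⟨hEsub he, (hA a).1 ha, fun h => hea (Or.inl h)⟩, fun h => hea (Or.inr h)⟩

theorem mem_cSig_stb_of_forall_exists_subset (h : IsExtensionSet 𝕊)
    (hD : ∀ a b, (a, b) ∈ D → (b, a) ∈ D → a = b) (htight : ∀ S ∈ 𝕊, AttacksOutside 𝕊 D S)
    (hcover : ∀ E ∈ cfSet 𝕊, AttacksOutside 𝕊 D E → ∃ S ∈ 𝕊, E ⊆ S) :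
    𝕊 ∈ cSig AF.stb := by
  have hstb : ((canonicalCF 𝕊 h).withoutAttacks D).stb = 𝕊 := by
    ext E
    rw [mem_stb_withoutAttacks_canonicalCF_iff h hD]
    constructor
    · rintro ⟨hE, hEatt⟩
      obtain ⟨S, hS, hES⟩ := hcover E hE hEatt
      rwa [eq_of_subset_of_attacksOutside hS hES hEatt]
    · exact fun hE => ⟨⟨subset_ArgS hE, fun a ha b hb => ⟨E, hE, ha, hb⟩⟩, htight E hE⟩
  refine ⟨_, afCompact_of_coe_A_eq_ArgS _ _ ?_, hstb⟩
  rw [hstb]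
  exact h.coe_toFinset

end CanonicalCF

section ThreeExtensions

variable {S₁ S₂ S₃ E : Set ℕ}

theorem diff_subset_inter_of_mem_cfSet (hE : E ∈ cfSet {S₁, S₂, S₃}) (h₂ : ¬E ⊆ S₂)
    (h₃ : ¬E ⊆ S₃) : E \ S₁ ⊆ S₂ ∩ S₃ := by
  rintro e ⟨he, he₁⟩
  obtain ⟨e₂, he₂E, he₂⟩ := Set.not_subset.1 h₂
  obtain ⟨e₃, he₃E, he₃⟩ := Set.not_subset.1 h₃
  have h₂e := hE.2 e₂ he₂E e he
  have h₃e := hE.2 e₃ he₃E e he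
  simp only [mem_PairsS_insert, mem_PairsS_singleton] at h₂e h₃e
  exact ⟨by tauto, by tauto⟩

theorem diff_subset_inter_of_forall_not_subset (hE : E ∈ cfSet {S₁, S₂, S₃})
    (hnot : ∀ S ∈ ({S₁, S₂, S₃} : Set (Set ℕ)), ¬E ⊆ S) :
    E \ S₁ ⊆ S₂ ∩ S₃ ∧ E \ S₂ ⊆ S₁ ∩ S₃ ∧ E \ S₃ ⊆ S₁ ∩ S₂ := by
  have h₁ := hnot S₁ (by simp)
  have h₂ := hnot S₂ (by simp)
  have h₃ := hnot S₃ (by simp)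
  have h213 : ({S₂, S₁, S₃} : Set (Set ℕ)) = {S₁, S₂, S₃} := Set.insert_comm _ _ _
  have h312 : ({S₃, S₁, S₂} : Set (Set ℕ)) = {S₁, S₂, S₃} := by
    rw [Set.insert_comm, Set.pair_comm]
  exact ⟨diff_subset_inter_of_mem_cfSet hE h₂ h₃,
    diff_subset_inter_of_mem_cfSet (h213 ▸ hE) h₁ h₃,
    diff_subset_inter_of_mem_cfSet (h312 ▸ hE) h₁ h₂⟩

theorem exists_subset_of_mem_cfSet_of_not_triangle
    (hno : ¬(((S₂ ∩ S₃) \ S₁).Nonempty ∧ ((S₁ ∩ S₃) \ S₂).Nonempty ∧ ((S₁ ∩ S₂) \ S₃).Nonempty))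
    (hE : E ∈ cfSet {S₁, S₂, S₃}) : ∃ S ∈ ({S₁, S₂, S₃} : Set (Set ℕ)), E ⊆ S := by
  by_contra! hnot
  obtain ⟨h₁, h₂, h₃⟩ := diff_subset_inter_of_forall_not_subset hE hnot
  have hne : ∀ S ∈ ({S₁, S₂, S₃} : Set (Set ℕ)), (E \ S).Nonempty := fun S hS =>
    Set.sdiff_nonempty.2 (hnot S hS)
  refine hno ⟨?_, ?_, ?_⟩
  · obtain ⟨e, he, he₁⟩ := hne S₁ (by simp)
    exact ⟨e, h₁ ⟨he, he₁⟩, he₁⟩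
  · obtain ⟨e, he, he₂⟩ := hne S₂ (by simp)
    exact ⟨e, h₂ ⟨he, he₂⟩, he₂⟩
  · obtain ⟨e, he, he₃⟩ := hne S₃ (by simp)
    exact ⟨e, h₃ ⟨he, he₃⟩, he₃⟩

theorem subset_pairwise_inter_of_forall_not_subset (hE : E ∈ cfSet {S₁, S₂, S₃})
    (hnot : ∀ S ∈ ({S₁, S₂, S₃} : Set (Set ℕ)), ¬E ⊆ S) :
    E ⊆ S₁ ∩ S₂ ∪ S₁ ∩ S₃ ∪ S₂ ∩ S₃ := by
  obtain ⟨h₁, h₂, -⟩ := diff_subset_inter_of_forall_not_subset hE hnot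
  intro e he
  by_cases he₁ : e ∈ S₁
  · by_cases he₂ : e ∈ S₂
    · exact Or.inl (Or.inl ⟨he₁, he₂⟩)
    · exact Or.inl (Or.inr (h₂ ⟨he, he₂⟩))
  · exact Or.inr (h₁ ⟨he, he₁⟩)

theorem mem_cSig_stb_triple_of_triangle (h : IsExtensionSet {S₁, S₂, S₃})
    (htight : ∀ S ∈ ({S₁, S₂, S₃} : Set (Set ℕ)), AttacksOutside {S₁, S₂, S₃} ∅ S)
    (hx : ((S₂ ∩ S₃) \ S₁).Nonempty) (hy : ((S₁ ∩ S₃) \ S₂).Nonempty) (hz : ((S₁ ∩ S₂) \ S₃).Nonempty) :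
    ({S₁, S₂, S₃} : Set (Set ℕ)) ∈ cSig AF.stb := by
  obtain ⟨x, ⟨hx₂, hx₃⟩, hx₁⟩ := hx
  obtain ⟨y, ⟨hy₁, hy₃⟩, hy₂⟩ := hy
  obtain ⟨z, ⟨hz₁, hz₂⟩, hz₃⟩ := hz
  obtain ⟨u, hu₁, hu⟩ := exists_mem_forall_notMem_of_attacksOutside (htight S₁ (by simp))
    (subset_ArgS (by simp) hx₂) hx₁
  obtain ⟨t, ht₂, ht⟩ := exists_mem_forall_notMem_of_attacksOutside (htight S₂ (by simp))
    (subset_ArgS (by simp) hy₁) hy₂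
  obtain ⟨v, hv₃, hv⟩ := exists_mem_forall_notMem_of_attacksOutside (htight S₃ (by simp))
    (subset_ArgS (by simp) hz₁) hz₃
  have hu₂ := hu S₂ (by simp) hx₂
  have hu₃ := hu S₃ (by simp) hx₃
  have ht₁ := ht S₁ (by simp) hy₁
  have ht₃ := ht S₃ (by simp) hy₃
  have hv₁ := hv S₁ (by simp) hz₁
  have hv₂ := hv S₂ (by simp) hz₂
  set P := S₁ ∩ S₂ ∪ S₁ ∩ S₃ ∪ S₂ ∩ S₃
  apply mem_cSig_stb_of_forall_exists_subset h (D := P ×ˢ {u})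
  · rintro a b ⟨-, hb⟩ ⟨-, ha⟩
    exact Eq.trans ha hb.symm
  · intro S hS a ha haS
    by_cases hau : a = u
    · rw [hau] at haS ⊢
      simp only [Set.mem_insert_iff, Set.mem_singleton_iff] at hS
      rcases hS with rfl | rfl | rfl
      · exact absurd hu₁ haS
      · exact ⟨t, ht₂, by simp [P, ht₁, ht₃, hu₂, hu₃]⟩
      · exact ⟨v, hv₃, by simp [P, hv₁, hv₂, hu₂, hu₃]⟩
    · obtain ⟨s, hs, hsa⟩ := htight S hS a ha haS
      refine ⟨s, hs, ?_⟩
      rintro (hPairs | ⟨-, rfl⟩)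
      · exact hsa (Or.inl hPairs)
      · exact hau rfl
  · intro E hE hEatt
    by_contra! hnot
    have hEP := subset_pairwise_inter_of_forall_not_subset hE hnot
    have huP : u ∉ P := by simp [P, hu₂, hu₃]
    obtain ⟨e, he, heu⟩ := hEatt u (subset_ArgS (by simp) hu₁) fun huE => huP (hEP huE)
    exact heu (Or.inr ⟨hEP he, rfl⟩)

end ThreeExtensions

theorem exists_eq_insert_insert_singleton_of_ncard_le_three {α : Type*} {s : Set α}
    (hs : s.Finite) (hne : s.Nonempty) (hcard : s.ncard ≤ 3) : ∃ a b c, s = {a, b, c} := by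
  have hpos := (Set.ncard_pos hs).2 hne
  obtain h | h | h : s.ncard = 1 ∨ s.ncard = 2 ∨ s.ncard = 3 := by omega
  · obtain ⟨a, rfl⟩ := Set.ncard_eq_one.1 h
    exact ⟨a, a, a, by simp⟩
  · obtain ⟨a, b, -, rfl⟩ := Set.ncard_eq_two.1 h
    exact ⟨a, b, b, by simp⟩
  · obtain ⟨a, b, c, -, -, -, rfl⟩ := Set.ncard_eq_three.1 h
    exact ⟨a, b, c, rfl⟩

theorem at_most_three_stable_extensions_compact (𝕊 : Set (Set ℕ)) (F : AF)
    (hF : AF.stb F = 𝕊) (hne : 𝕊 ≠ ∅) (hcard : 𝕊.ncard ≤ 3) :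
    ∃ F' : AF, AFCompact AF.stb F' ∧ AF.stb F' = 𝕊 := by
  subst hF
  have hfin : IsExtensionSet F.stb := F.A.finite_toSet.subset (ArgS_stb_subset F)
  have htight : ∀ S ∈ F.stb, AttacksOutside F.stb ∅ S := fun _ => attacksOutside_of_mem_stb
  have hfinS : F.stb.Finite := hfin.finite_subsets.subset fun _ => subset_ArgS
  obtain ⟨S₁, S₂, S₃, h𝕊⟩ := exists_eq_insert_insert_singleton_of_ncard_le_three hfinS
    (Set.nonempty_iff_ne_empty.2 hne) hcard
  rw [h𝕊] at hfin htight ⊢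
  by_cases htri : ((S₂ ∩ S₃) \ S₁).Nonempty ∧ ((S₁ ∩ S₃) \ S₂).Nonempty ∧ ((S₁ ∩ S₂) \ S₃).Nonempty
  · exact mem_cSig_stb_triple_of_triangle hfin htight htri.1 htri.2.1 htri.2.2
  · exact mem_cSig_stb_of_forall_exists_subset hfin (D := ∅) (by simp) htight
      fun _ hE _ => exists_subset_of_mem_cfSet_of_not_triangle htri hE
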